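/- arXiv:math/0002069 — 4 statements merged into one kernel-verified Lean document; each statement's English description precedes it below -/
import Mathlib

section
/- Let K be a field and A a K-vector space. For m ≥ 1 let C^m denote the space of K-multilinear maps A^m → A, with f ∈ C^m given degree |f| = m − 1. For f ∈ C^m and g ∈ C^n define f∘g ∈ C^{m+n−1} by (f∘g)(a₁,…,a_{m+n−1}) = Σ_{i=1}^{m} (−1)^{(n−1)(i−1)} f(a₁,…,a_{i−1}, g(a_i,…,a_{i+n−1}), a_{i+n},…,a_{m+n−1}). Then for all f ∈ C^m, g ∈ C^n, h ∈ C^p the graded pre-Lie identity holds: (f∘g)∘h − f∘(g∘h) = (−1)^{(n−1)(p−1)} ((f∘h)∘g − f∘(h∘g)). -/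
/-- View a multilinear map `f : A^m → A` as a function on sequences `ℕ → A`
(reading only the first `m` coordinates). -/
def Gerstenhaber.lift {K A : Type*} [Field K] [AddCommGroup A] [Module K A]
    (m : ℕ) (f : MultilinearMap K (fun _ : Fin m => A) A) : (ℕ → A) → A :=
  fun a => f fun i => a i

/-- Insertion of a cochain `g` of arity `n` into the `i`-th slot (0-indexed) of a cochain `f`
of arity `m`, producing a cochain of arity `m + n - 1`: position `j < i` of `f` reads input
`j`, position `i` reads `g` applied to inputs `i, …, i+n-1`, and position `j > i` reads input
`j + n - 1`. -/
def Gerstenhaber.insert {A : Type*} (n i : ℕ)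
    (f : (ℕ → A) → A) (g : (ℕ → A) → A) : (ℕ → A) → A :=
  fun a => f fun j =>
    if j < i then a j else if j = i then g (fun k => a (i + k)) else a (j + n - 1)

/-- The Gerstenhaber circle product `f ∘ g` of a cochain of arity `m` with a cochain of
arity `n`: `(f∘g)(a₁,…,a_{m+n−1}) = Σ_{i=1}^{m} (−1)^{(n−1)(i−1)}
f(a₁,…,a_{i−1}, g(a_i,…,a_{i+n−1}), a_{i+n},…,a_{m+n−1})`
(here `i` runs 0-indexed over `Finset.range m`). -/
def Gerstenhaber.circ {K A : Type*} [Field K] [AddCommGroup A] [Module K A]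
    (m n : ℕ) (f : (ℕ → A) → A) (g : (ℕ → A) → A) : (ℕ → A) → A :=
  fun a => ∑ i ∈ Finset.range m, ((-1 : K) ^ ((n - 1) * i)) • Gerstenhaber.insert n i f g a

namespace Gerstenhaber

def dins {A : Type*} (x y i q : ℕ) (F X Y : (ℕ → A) → A) : (ℕ → A) → A :=
  fun a => F fun k =>
    if k < i then a k
    else if k = i then X (fun t => a (i + t))
    else if k < q then a (k + x - 1)
    else if k = q then Y (fun t => a (q + x - 1 + t))
    else a (k + x + y - 2)

lemma insert_nested {A : Type*} (n p i l : ℕ) (hl : l < n) (hp : 1 ≤ p)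
    (F G H : (ℕ → A) → A) (a : ℕ → A) :
    Gerstenhaber.insert p (i + l) (Gerstenhaber.insert n i F G) H a
      = Gerstenhaber.insert (n + p - 1) i F (Gerstenhaber.insert p l G H) a := by
  simp only [Gerstenhaber.insert]
  congr 1
  funext k
  split_ifs <;> first
    | rfl
    | omega
    | (congr 1; omega)
    | (congr 1; funext t; split_ifs <;> first
        | rfl
        | omega
        | (congr 1; omega)
        | (congr 1; funext u; congr 1; omega))

lemma insert_comp_lt {A : Type*} (y x j i : ℕ) (hji : j < i)
    (F X Y : (ℕ → A) → A) (a : ℕ → A) :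
    Gerstenhaber.insert y j (Gerstenhaber.insert x i F X) Y a
      = dins y x j i F Y X a := by
  simp only [Gerstenhaber.insert, dins]
  congr 1
  funext k
  split_ifs <;> first
    | rfl
    | omega
    | (congr 1; omega)
    | (congr 1; funext t; split_ifs <;> first
        | rfl
        | omega
        | (congr 1; omega))

lemma insert_comp_ge {A : Type*} (x y i q : ℕ) (hiq : i < q) (hx : 1 ≤ x)
    (F X Y : (ℕ → A) → A)
    (hX : ∀ b b' : ℕ → A, (∀ t < x, b t = b' t) → X b = X b') (a : ℕ → A) :
    Gerstenhaber.insert y (q + x - 1) (Gerstenhaber.insert x i F X) Y a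
      = dins x y i q F X Y a := by
  simp only [Gerstenhaber.insert, dins]
  congr 1
  funext k
  rcases lt_trichotomy k i with hk | rfl | hk
  · rw [if_pos hk, if_pos hk, if_pos (show k < q + x - 1 by omega)]
  · rw [if_neg (lt_irrefl k), if_neg (lt_irrefl k), if_pos rfl, if_pos rfl]
    refine hX _ _ fun t ht => ?_
    rw [if_pos (show k + t < q + x - 1 by omega)]
  · rw [if_neg (by omega : ¬ k < i), if_neg (by omega : ¬ k = i),
      if_neg (by omega : ¬ k < i), if_neg (by omega : ¬ k = i)]
    rcases lt_trichotomy k q with hq | rfl | hq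
    · rw [if_pos (show k + x - 1 < q + x - 1 by omega), if_pos hq]
    · rw [if_neg (by omega : ¬ k + x - 1 < k + x - 1), if_pos rfl,
        if_neg (by omega : ¬ k < k), if_pos rfl]
    · rw [if_neg (by omega : ¬ k + x - 1 < q + x - 1), if_neg (by omega : ¬ k + x - 1 = q + x - 1),
        if_neg (by omega : ¬ k < q), if_neg (by omega : ¬ k = q)]
      congr 1; omega

variable {K A : Type*} [Field K] [AddCommGroup A] [Module K A]

lemma lift_eq_of (n : ℕ) (g : MultilinearMap K (fun _ : Fin n => A) A)
    (b b' : ℕ → A) (hb : ∀ t < n, b t = b' t) : lift n g b = lift n g b' := by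
  unfold lift
  congr 1
  funext t
  exact hb t t.isLt

lemma insert_lift_sum {m : ℕ} (N i : ℕ) (hi : i < m)
    (f : MultilinearMap K (fun _ : Fin m => A) A)
    {ι : Type*} (s : Finset ι) (c : ι → K) (T : ι → (ℕ → A) → A) (a : ℕ → A) :
    Gerstenhaber.insert N i (lift m f) (fun b => ∑ l ∈ s, c l • T l b) a
      = ∑ l ∈ s, c l • Gerstenhaber.insert N i (lift m f) (T l) a := by
  classical
  set I : Fin m := ⟨i, hi⟩ with hI
  set base : Fin m → A := fun k => if (k : ℕ) < i then a k else a ((k : ℕ) + N - 1) with hbase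
  have harg : ∀ v : A,
      (fun k : Fin m => if (k : ℕ) < i then a k else if (k : ℕ) = i then v
        else a ((k : ℕ) + N - 1)) = Function.update base I v := by
    intro v
    funext k
    rcases eq_or_ne k I with rfl | hk
    · simp [Function.update_self, hI, hbase]
    · have hki : (k : ℕ) ≠ i := fun hvk => hk (Fin.ext (by simp [hvk, hI]))
      rw [Function.update_of_ne hk]
      simp only [hbase]
      rcases lt_or_ge (k : ℕ) i with h | h
      · rw [if_pos h, if_pos h]
      · rw [if_neg (by omega), if_neg hki, if_neg (by omega)]
  simp only [Gerstenhaber.insert, lift]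
  rw [harg]
  have : ∀ v : A, f (Function.update base I v) = f.toLinearMap base I v := fun v => rfl
  rw [this, map_sum]
  refine Finset.sum_congr rfl fun l _ => ?_
  rw [LinearMap.map_smul, harg, this]

lemma range_split {M : Type*} [AddCommMonoid M] (i n m : ℕ) (hi : i < m) (φ : ℕ → M) :
    ∑ j ∈ Finset.range (m + n), φ j
      = ((∑ j ∈ Finset.range i, φ j) + ∑ l ∈ Finset.range (n + 1), φ (i + l))
        + ∑ t ∈ Finset.range (m - 1 - i), φ (i + (n + 1) + t) := by
  have h1 : m + n = (i + (n + 1)) + (m - 1 - i) := by omega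
  rw [h1, Finset.sum_range_add, Finset.sum_range_add]

lemma filter_lt_range {M : Type*} [AddCommMonoid M] (i m : ℕ) (him : i ≤ m) (φ : ℕ → M) :
    ∑ j ∈ Finset.range i, φ j = ∑ j ∈ Finset.range m, if j < i then φ j else 0 := by
  rw [← Finset.sum_filter]
  congr 1
  ext j
  simp only [Finset.mem_filter, Finset.mem_range]
  omega

lemma filter_gt_range {M : Type*} [AddCommMonoid M] (i m : ℕ) (φ : ℕ → M) :
    ∑ t ∈ Finset.range (m - 1 - i), φ (i + 1 + t)
      = ∑ q ∈ Finset.range m, if i < q then φ q else 0 := by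
  rw [← Finset.sum_filter]
  have h1 : (Finset.range m).filter (fun q => i < q) = Finset.Ico (i + 1) m := by
    ext q
    simp only [Finset.mem_filter, Finset.mem_range, Finset.mem_Ico]
    omega
  rw [h1, Finset.sum_Ico_eq_sum_range]
  have h2 : m - (i + 1) = m - 1 - i := by omega
  rw [h2]

lemma neg_one_pow_add_two_mul (e k : ℕ) : (-1 : K) ^ (e + 2 * k) = (-1 : K) ^ e := by
  rw [pow_add, pow_mul, neg_one_sq, one_pow, mul_one]

lemma half (m n' p' : ℕ) (f : MultilinearMap K (fun _ : Fin m => A) A)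
    (G H : (ℕ → A) → A)
    (hG : ∀ b b' : ℕ → A, (∀ t < n' + 1, b t = b' t) → G b = G b') (a : ℕ → A) :
    circ (K := K) (m + n') (p' + 1) (circ (K := K) m (n' + 1) (lift m f) G) H a
      - circ (K := K) m (n' + p' + 1) (lift m f) (circ (K := K) (n' + 1) (p' + 1) G H) a
    = (∑ i ∈ Finset.range m, ∑ q ∈ Finset.range m,
        if i < q then ((-1 : K) ^ (p' * (q + n') + n' * i)) •
          dins (n' + 1) (p' + 1) i q (lift m f) G H a else 0)
      + ∑ i ∈ Finset.range m, ∑ q ∈ Finset.range m,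
        if i < q then ((-1 : K) ^ (p' * i + n' * q)) •
          dins (p' + 1) (n' + 1) i q (lift m f) H G a else 0 := by
  have hS1 : circ (K := K) (m + n') (p' + 1) (circ (K := K) m (n' + 1) (lift m f) G) H a
      = ∑ i ∈ Finset.range m, ∑ j ∈ Finset.range (m + n'),
          ((-1 : K) ^ (p' * j + n' * i)) •
            Gerstenhaber.insert (p' + 1) j
              (Gerstenhaber.insert (n' + 1) i (lift m f) G) H a := by
    simp only [circ, Gerstenhaber.insert, Nat.add_sub_cancel, Finset.smul_sum, smul_smul,
      ← pow_add]
    rw [Finset.sum_comm]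
  have h3 : ∀ i ∈ Finset.range m,
      (∑ j ∈ Finset.range (m + n'), ((-1 : K) ^ (p' * j + n' * i)) •
        Gerstenhaber.insert (p' + 1) j
          (Gerstenhaber.insert (n' + 1) i (lift m f) G) H a)
      = ((∑ j ∈ Finset.range i, ((-1 : K) ^ (p' * j + n' * i)) •
            dins (p' + 1) (n' + 1) j i (lift m f) H G a)
          + ∑ l ∈ Finset.range (n' + 1), ((-1 : K) ^ (p' * (i + l) + n' * i)) •
              Gerstenhaber.insert (n' + p' + 1) i (lift m f)
                (Gerstenhaber.insert (p' + 1) l G H) a)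
        + ∑ t ∈ Finset.range (m - 1 - i), ((-1 : K) ^ (p' * (i + 1 + t + n') + n' * i)) •
            dins (n' + 1) (p' + 1) i (i + 1 + t) (lift m f) G H a := by
    intro i hi
    rw [range_split i n' m (Finset.mem_range.mp hi)]
    congr 1
    · congr 1
      · refine Finset.sum_congr rfl fun j hj => ?_
        rw [insert_comp_lt (p' + 1) (n' + 1) j i (Finset.mem_range.mp hj) (lift m f) G H a]
      · refine Finset.sum_congr rfl fun l hl => ?_
        rw [insert_nested (n' + 1) (p' + 1) i l (Finset.mem_range.mp hl) (by omega)
          (lift m f) G H a]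
        have e : n' + 1 + (p' + 1) - 1 = n' + p' + 1 := by omega
        rw [e]
    · refine Finset.sum_congr rfl fun t ht => ?_
      congr 1
      · congr 1
        ring
      · have e2 : i + (n' + 1) + t = (i + 1 + t) + (n' + 1) - 1 := by omega
        rw [e2, insert_comp_ge (n' + 1) (p' + 1) i (i + 1 + t) (by omega) (by omega)
          (lift m f) G H hG a]
  have hS2 : circ (K := K) m (n' + p' + 1) (lift m f) (circ (K := K) (n' + 1) (p' + 1) G H) a
      = ∑ i ∈ Finset.range m, ∑ l ∈ Finset.range (n' + 1),
          ((-1 : K) ^ (p' * (i + l) + n' * i)) •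
            Gerstenhaber.insert (n' + p' + 1) i (lift m f)
              (Gerstenhaber.insert (p' + 1) l G H) a := by
    have hcirc : circ (K := K) (n' + 1) (p' + 1) G H
        = fun b => ∑ l ∈ Finset.range (n' + 1), ((-1 : K) ^ (p' * l)) •
            Gerstenhaber.insert (p' + 1) l G H b := by
      funext b
      simp only [circ, Nat.add_sub_cancel]
    rw [hcirc]
    simp only [circ, Nat.add_sub_cancel]
    refine Finset.sum_congr rfl fun i hi => ?_
    rw [insert_lift_sum (n' + p' + 1) i (Finset.mem_range.mp hi) f (Finset.range (n' + 1))
      (fun l => (-1 : K) ^ (p' * l)) (fun l => Gerstenhaber.insert (p' + 1) l G H) a,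
      Finset.smul_sum]
    refine Finset.sum_congr rfl fun l hl => ?_
    rw [smul_smul, ← pow_add]
    congr 2
    ring
  rw [hS1, Finset.sum_congr rfl h3, hS2]
  rw [Finset.sum_add_distrib, Finset.sum_add_distrib]
  have hA : (∑ i ∈ Finset.range m, ∑ j ∈ Finset.range i, ((-1 : K) ^ (p' * j + n' * i)) •
        dins (p' + 1) (n' + 1) j i (lift m f) H G a)
      = ∑ i ∈ Finset.range m, ∑ q ∈ Finset.range m,
          if i < q then ((-1 : K) ^ (p' * i + n' * q)) •
            dins (p' + 1) (n' + 1) i q (lift m f) H G a else 0 := by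
    rw [Finset.sum_congr rfl fun i hi => filter_lt_range i m (le_of_lt (Finset.mem_range.mp hi))
      (fun j => ((-1 : K) ^ (p' * j + n' * i)) • dins (p' + 1) (n' + 1) j i (lift m f) H G a)]
    exact Finset.sum_comm
  have hC : (∑ i ∈ Finset.range m, ∑ t ∈ Finset.range (m - 1 - i),
        ((-1 : K) ^ (p' * (i + 1 + t + n') + n' * i)) •
          dins (n' + 1) (p' + 1) i (i + 1 + t) (lift m f) G H a)
      = ∑ i ∈ Finset.range m, ∑ q ∈ Finset.range m,
          if i < q then ((-1 : K) ^ (p' * (q + n') + n' * i)) •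
            dins (n' + 1) (p' + 1) i q (lift m f) G H a else 0 := by
    refine Finset.sum_congr rfl fun i _ => ?_
    exact filter_gt_range i m
      (fun q => ((-1 : K) ^ (p' * (q + n') + n' * i)) •
        dins (n' + 1) (p' + 1) i q (lift m f) G H a)
  rw [hA, hC]
  abel

end Gerstenhaber

/-- For multilinear maps (Hochschild cochains) `f ∈ C^m`, `g ∈ C^n`,
`h ∈ C^p` (with `|f| = m − 1`, etc.), the Gerstenhaber circle product satisfies the graded
pre-Lie identity
`(f∘g)∘h − f∘(g∘h) = (−1)^{(n−1)(p−1)} ((f∘h)∘g − f∘(h∘g))`. -/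
theorem gerstenhaber_circ_graded_preLie
    (K A : Type*) [Field K] [AddCommGroup A] [Module K A]
    (m n p : ℕ) (hm : 1 ≤ m) (hn : 1 ≤ n) (hp : 1 ≤ p)
    (f : MultilinearMap K (fun _ : Fin m => A) A)
    (g : MultilinearMap K (fun _ : Fin n => A) A)
    (h : MultilinearMap K (fun _ : Fin p => A) A) :
    (Gerstenhaber.circ (K := K) (m + n - 1) p
        (Gerstenhaber.circ (K := K) m n (Gerstenhaber.lift m f) (Gerstenhaber.lift n g))
        (Gerstenhaber.lift p h)
      - Gerstenhaber.circ (K := K) m (n + p - 1) (Gerstenhaber.lift m f)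
          (Gerstenhaber.circ (K := K) n p (Gerstenhaber.lift n g) (Gerstenhaber.lift p h)))
      = ((-1 : K) ^ ((n - 1) * (p - 1))) •
        (Gerstenhaber.circ (K := K) (m + p - 1) n
            (Gerstenhaber.circ (K := K) m p (Gerstenhaber.lift m f) (Gerstenhaber.lift p h))
            (Gerstenhaber.lift n g)
          - Gerstenhaber.circ (K := K) m (p + n - 1) (Gerstenhaber.lift m f)
              (Gerstenhaber.circ (K := K) p n (Gerstenhaber.lift p h)
                (Gerstenhaber.lift n g))) := by
  obtain ⟨n', rfl⟩ : ∃ n', n = n' + 1 := ⟨n - 1, by omega⟩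
  obtain ⟨p', rfl⟩ : ∃ p', p = p' + 1 := ⟨p - 1, by omega⟩
  have e1 : m + (n' + 1) - 1 = m + n' := by omega
  have e2 : n' + 1 + (p' + 1) - 1 = n' + p' + 1 := by omega
  have e3 : m + (p' + 1) - 1 = m + p' := by omega
  have e4 : p' + 1 + (n' + 1) - 1 = p' + n' + 1 := by omega
  have e5 : (n' + 1 - 1) * (p' + 1 - 1) = n' * p' := by simp
  rw [e1, e2, e3, e4, e5]
  funext a
  simp only [Pi.sub_apply, Pi.smul_apply]
  rw [Gerstenhaber.half m n' p' f (Gerstenhaber.lift (n' + 1) g) (Gerstenhaber.lift (p' + 1) h)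
      (Gerstenhaber.lift_eq_of (n' + 1) g) a,
    Gerstenhaber.half m p' n' f (Gerstenhaber.lift (p' + 1) h) (Gerstenhaber.lift (n' + 1) g)
      (Gerstenhaber.lift_eq_of (p' + 1) h) a,
    smul_add]
  have hP1 : (∑ i ∈ Finset.range m, ∑ q ∈ Finset.range m,
        if i < q then ((-1 : K) ^ (p' * (q + n') + n' * i)) •
          Gerstenhaber.dins (n' + 1) (p' + 1) i q (Gerstenhaber.lift m f)
            (Gerstenhaber.lift (n' + 1) g) (Gerstenhaber.lift (p' + 1) h) a else 0)
      = ((-1 : K) ^ (n' * p')) • ∑ i ∈ Finset.range m, ∑ q ∈ Finset.range m,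
          if i < q then ((-1 : K) ^ (n' * i + p' * q)) •
            Gerstenhaber.dins (n' + 1) (p' + 1) i q (Gerstenhaber.lift m f)
              (Gerstenhaber.lift (n' + 1) g) (Gerstenhaber.lift (p' + 1) h) a else 0 := by
    rw [Finset.smul_sum]
    refine Finset.sum_congr rfl fun i _ => ?_
    rw [Finset.smul_sum]
    refine Finset.sum_congr rfl fun q _ => ?_
    split_ifs with hiq
    · rw [smul_smul, ← pow_add]
      have e : n' * p' + (n' * i + p' * q) = p' * (q + n') + n' * i := by ring
      rw [e]
    · rw [smul_zero]
  have hP2 : (∑ i ∈ Finset.range m, ∑ q ∈ Finset.range m,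
        if i < q then ((-1 : K) ^ (p' * i + n' * q)) •
          Gerstenhaber.dins (p' + 1) (n' + 1) i q (Gerstenhaber.lift m f)
            (Gerstenhaber.lift (p' + 1) h) (Gerstenhaber.lift (n' + 1) g) a else 0)
      = ((-1 : K) ^ (n' * p')) • ∑ i ∈ Finset.range m, ∑ q ∈ Finset.range m,
          if i < q then ((-1 : K) ^ (n' * (q + p') + p' * i)) •
            Gerstenhaber.dins (p' + 1) (n' + 1) i q (Gerstenhaber.lift m f)
              (Gerstenhaber.lift (p' + 1) h) (Gerstenhaber.lift (n' + 1) g) a else 0 := by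
    rw [Finset.smul_sum]
    refine Finset.sum_congr rfl fun i _ => ?_
    rw [Finset.smul_sum]
    refine Finset.sum_congr rfl fun q _ => ?_
    split_ifs with hiq
    · rw [smul_smul, ← pow_add]
      have e : n' * p' + (n' * (q + p') + p' * i) = (p' * i + n' * q) + 2 * (n' * p') := by
        ring
      rw [e, Gerstenhaber.neg_one_pow_add_two_mul]
    · rw [smul_zero]
  rw [hP1, hP2]
  exact add_comm _ _
end

section
/- For every integer n ≥ 1, the number of rooted trees on the vertex set Fin n — that is, the number of pairs (T, r) where T is a tree (a connected simple graph with no cycles) on the vertex set Fin n and r ∈ Fin n is a distinguished vertex (the root) — equals n^{n−1}. -/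
/-!
A tree rooted at `r` is the same thing as its parent map `p`, which fixes `r` and moves every
other vertex one step towards it; these are exactly the maps under whose iteration every vertex
reaches the fixed point `r`. Joyal's bijection identifies doubly rooted trees `(p, r, s)` with
arbitrary self-maps `f`: write the path from `s` to the root as `s = L₁, L₂, …, L_k = r`, let
`c₁ < ⋯ < c_k` be its vertices in increasing order, and put `f cᵢ = Lᵢ` and `f = p` elsewhere.
The `cᵢ` are then exactly the periodic points of `f`, which is how the inverse recovers the path.
Hence `n` times the number of rooted trees is `n ^ n`.
-/

open Function Set SimpleGraph

namespace Function

variable {α : Type*} {f g : α → α} {S T : Set α} {x : α}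

lemma exists_iterate_mem_periodicPts [Finite α] (f : α → α) (x : α) :
    ∃ m, f^[m] x ∈ periodicPts f := by
  obtain ⟨i, j, hij, hne⟩ : ∃ i j, f^[i] x = f^[j] x ∧ i ≠ j := by
    simpa [Injective] using not_injective_infinite_finite (f^[·] x)
  wlog h : i < j generalizing i j
  · exact this j i hij.symm hne.symm (by omega)
  refine ⟨i, mk_mem_periodicPts (Nat.sub_pos_of_lt h) ?_⟩
  rw [IsPeriodicPt, IsFixedPt, ← iterate_add_apply, Nat.sub_add_cancel h.le, hij]

lemma mem_of_iterate_mem_of_mem_periodicPts (hS : MapsTo f S S) (hx : x ∈ periodicPts f)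
    {k : ℕ} (hk : f^[k] x ∈ S) : x ∈ S := by
  obtain ⟨m, hm, hper⟩ := mem_periodicPts.mp hx
  have := hS.iterate (m * k - k) hk
  rwa [← iterate_add_apply, Nat.sub_add_cancel (Nat.le_mul_of_pos_left k hm),
    (hper.mul_const k).eq] at this

lemma periodicPts_eq_of_mapsTo_of_injOn [Finite α] (hmaps : MapsTo f S S) (hinj : InjOn f S)
    (hreach : ∀ x, ∃ k, f^[k] x ∈ S) : periodicPts f = S := by
  refine Subset.antisymm (fun x hx => ?_) fun x hx => ?_
  · obtain ⟨k, hk⟩ := hreach x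
    exact mem_of_iterate_mem_of_mem_periodicPts hmaps hx hk
  · have hsemi : Semiconj Subtype.val (hmaps.restrict f S S) f := fun _ => rfl
    exact hsemi.mapsTo_periodicPts ((hmaps.restrict_inj.mpr hinj).mem_periodicPts ⟨x, hx⟩)

lemma exists_iterate_mem_of_eqOn_compl (hfg : ∀ x ∉ S, g x = f x)
    (hS : ∀ x ∈ S, ∃ k, g^[k] x ∈ T) {m : ℕ} (hm : f^[m] x ∈ S) : ∃ k, g^[k] x ∈ T := by
  induction m generalizing x with
  | zero => exact hS x hm
  | succ m ih =>
    by_cases hx : x ∈ S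
    · exact hS x hx
    obtain ⟨k, hk⟩ := ih (x := f x) hm
    exact ⟨k + 1, by rwa [iterate_succ_apply, hfg x hx]⟩

end Function

namespace Cayley

variable {V : Type*} {p q : V → V} {r : V}

def IsParentMap (p : V → V) (r : V) : Prop :=
  p r = r ∧ ∀ v, ∃ k, p^[k] v = r

def parentGraph (p : V → V) (r : V) : SimpleGraph V :=
  SimpleGraph.fromRel fun a b => a ≠ r ∧ p a = b

namespace IsParentMap

lemma eq_root_of_mem_periodicPts (hp : IsParentMap p r) {v : V} (hv : v ∈ periodicPts p) :
    v = r := by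
  obtain ⟨k, hk⟩ := hp.2 v
  exact mem_of_iterate_mem_of_mem_periodicPts (S := {r}) (fun _ h => h ▸ hp.1) hv hk

lemma apply_ne (hp : IsParentMap p r) {v : V} (hv : v ≠ r) : p v ≠ v :=
  fun h => hv (hp.eq_root_of_mem_periodicPts (mk_mem_periodicPts one_pos h))

lemma parentGraph_adj (hp : IsParentMap p r) {a b : V} :
    (parentGraph p r).Adj a b ↔ (a ≠ r ∧ p a = b) ∨ (b ≠ r ∧ p b = a) := by
  refine ⟨fun h => ((fromRel_adj _ _ _).mp h).2, fun h => (fromRel_adj _ _ _).mpr ⟨?_, h⟩⟩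
  rcases h with ⟨ha, rfl⟩ | ⟨hb, rfl⟩
  exacts [(hp.apply_ne ha).symm, hp.apply_ne hb]

lemma parentGraph_adj_apply (hp : IsParentMap p r) {v : V} (hv : v ≠ r) :
    (parentGraph p r).Adj v (p v) :=
  hp.parentGraph_adj.mpr (Or.inl ⟨hv, rfl⟩)

lemma connected_parentGraph (hp : IsParentMap p r) : (parentGraph p r).Connected := by
  have reach : ∀ k v, p^[k] v = r → (parentGraph p r).Reachable v r := by
    intro k
    induction k with
    | zero => rintro v rfl; rfl
    | succ k ih =>
      intro v hv
      by_cases hvr : v = r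
      · rw [hvr]
      · exact (hp.parentGraph_adj_apply hvr).reachable.trans (ih (p v) hv)
  have : Nonempty V := ⟨r⟩
  refine Connected.mk fun a b => ?_
  obtain ⟨⟨k, hk⟩, ⟨l, hl⟩⟩ := And.intro (hp.2 a) (hp.2 b)
  exact (reach k a hk).trans (reach l b hl).symm

/-- Injective because two vertices that are each other's parent would be periodic points of `p`
other than the root. -/
noncomputable def edgeSetEquiv (hp : IsParentMap p r) :
    {v // v ≠ r} ≃ (parentGraph p r).edgeSet :=
  Equiv.ofBijective (fun v => ⟨s(v.1, p v.1), hp.parentGraph_adj_apply v.2⟩) <| by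
    refine ⟨fun a b hab => ?_, ?_⟩
    · rcases Sym2.eq_iff.mp (congrArg Subtype.val hab) with ⟨h, -⟩ | ⟨hab, hba⟩
      · exact Subtype.ext h
      · refine absurd (hp.eq_root_of_mem_periodicPts (mk_mem_periodicPts two_pos ?_)) a.2
        change p (p a.1) = a.1
        rw [hba, ← hab]
    · rintro ⟨e, he⟩
      induction e using Sym2.ind with
      | _ a b =>
      rcases hp.parentGraph_adj.mp (mem_edgeSet _ |>.mp he) with ⟨ha, rfl⟩ | ⟨hb, rfl⟩
      · exact ⟨⟨a, ha⟩, rfl⟩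
      · exact ⟨⟨b, hb⟩, Subtype.ext Sym2.eq_swap⟩

lemma isTree_parentGraph [Finite V] (hp : IsParentMap p r) : (parentGraph p r).IsTree := by
  classical
  refine isTree_iff_connected_and_card.mpr ⟨hp.connected_parentGraph, ?_⟩
  rw [← Nat.card_congr hp.edgeSetEquiv, ← Finite.card_option,
    Nat.card_congr (Equiv.optionSubtypeNe r)]

/-- By induction on the number of steps to the root: if `p v ≠ q v`, then `v` is the `q`-parent
of `p v`, hence by induction its `p`-parent, and `v` would be a periodic point of `p`. -/
lemma eq_of_parentGraph_eq (hp : IsParentMap p r) (hq : IsParentMap q r)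
    (h : parentGraph p r = parentGraph q r) : p = q := by
  suffices ∀ k v, p^[k] v = r → p v = q v from funext fun v => this _ v (hp.2 v).choose_spec
  intro k
  induction k with
  | zero => intro v hv; rw [iterate_zero_apply] at hv; rw [hv, hp.1, hq.1]
  | succ k ih =>
    intro v hv
    by_cases hvr : v = r
    · rw [hvr, hp.1, hq.1]
    by_contra hne
    have hqp : q (p v) = v := by
      have := hp.parentGraph_adj_apply hvr
      rw [h, hq.parentGraph_adj] at this
      tauto
    refine hvr (hp.eq_root_of_mem_periodicPts (mk_mem_periodicPts two_pos ?_))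
    change p (p v) = v
    rw [ih (p v) hv, hqp]

end IsParentMap

lemma _root_.SimpleGraph.IsTree.exists_isParentMap {T : SimpleGraph V} (hT : T.IsTree) (r : V) :
    ∃ p, IsParentMap p r ∧ parentGraph p r = T := by
  have closer : ∀ v, v ≠ r → ∃ w, T.Adj v w ∧ T.dist w r < T.dist v r := by
    intro v hv
    obtain ⟨w, hw⟩ := hT.connected.exists_walk_length_eq_dist v r
    have hnil := Walk.not_nil_of_ne (p := w) hv
    refine ⟨w.snd, w.adj_snd hnil, ?_⟩
    have := dist_le w.tail
    have := w.length_tail_add_one hnil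
    omega
  choose next hnext using closer
  classical
  let p v := if h : v = r then r else next v h
  have hp : IsParentMap p r := by
    refine ⟨dif_pos rfl, fun v => ?_⟩
    induction hd : T.dist v r using Nat.strong_induction_on generalizing v with
    | _ d ih =>
      by_cases hv : v = r
      · exact ⟨0, hv⟩
      obtain ⟨k, hk⟩ := ih _ (hd ▸ (hnext v hv).2) (next v hv) rfl
      exact ⟨k + 1, by simp only [iterate_succ_apply, p, dif_neg hv, hk]⟩
  have hle : parentGraph p r ≤ T := by
    have hadj : ∀ v, v ≠ r → T.Adj v (p v) := fun v hv => by
      simpa only [p, dif_neg hv] using (hnext v hv).1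
    intro a b hab
    rcases hp.parentGraph_adj.mp hab with ⟨ha, rfl⟩ | ⟨hb, rfl⟩
    exacts [hadj a ha, (hadj b hb).symm]
  exact ⟨p, hp, (isTree_iff_minimal_connected.mp hT).eq_of_le hp.connected_parentGraph hle⟩

theorem card_rootedTree_eq_card_isParentMap [Finite V] :
    Nat.card {t : SimpleGraph V × V // t.1.IsTree} =
      Nat.card {q : (V → V) × V // IsParentMap q.1 q.2} := by
  refine (Nat.card_congr (Equiv.ofBijective
    (fun q => ⟨(parentGraph q.1.1 q.1.2, q.1.2), q.2.isTree_parentGraph⟩) ⟨?_, ?_⟩)).symm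
  · rintro ⟨⟨p, r⟩, hp⟩ ⟨⟨q, r'⟩, hq⟩ h
    simp only [Subtype.mk.injEq, Prod.mk.injEq] at h
    obtain ⟨hgraph, rfl⟩ := h
    simp only [Subtype.mk.injEq, Prod.mk.injEq, and_true]
    exact hp.eq_of_parentGraph_eq hq hgraph
  · rintro ⟨⟨T, r⟩, hT⟩
    obtain ⟨p, hp, rfl⟩ := hT.exists_isParentMap r
    exact ⟨⟨(p, r), hp⟩, rfl⟩

section Override

variable [DecidableEq V]

def overrideOn (l m : List V) (g : V → V) (x : V) : V :=
  if x ∈ l then m.getD (l.idxOf x) x else g x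

lemma overrideOn_getElem {l : List V} (hl : l.Nodup) (m : List V) (g : V → V) {i : ℕ}
    (hi : i < l.length) : overrideOn l m g l[i] = m.getD i l[i] := by
  rw [overrideOn, if_pos (List.getElem_mem hi), hl.idxOf_getElem]

lemma overrideOn_of_not_mem {l : List V} (m : List V) (g : V → V) {x : V} (hx : x ∉ l) :
    overrideOn l m g x = g x :=
  if_neg hx

end Override

section Spine

variable [DecidableEq V]

noncomputable def IsParentMap.depth (hp : IsParentMap p r) (v : V) : ℕ :=
  Nat.find (hp.2 v)

variable (hp : IsParentMap p r) (s : V)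

lemma IsParentMap.iterate_depth (v : V) : p^[hp.depth v] v = r :=
  Nat.find_spec (hp.2 v)

lemma IsParentMap.iterate_eq_root_iff {v : V} {i : ℕ} : p^[i] v = r ↔ hp.depth v ≤ i := by
  refine ⟨fun h => Nat.find_le h, fun h => ?_⟩
  obtain ⟨j, rfl⟩ := Nat.exists_eq_add_of_le h
  rw [add_comm, iterate_add_apply, hp.iterate_depth, iterate_fixed hp.1]

noncomputable def spine : List V :=
  List.iterate p s (hp.depth s + 1)

lemma length_spine : (spine hp s).length = hp.depth s + 1 :=
  List.length_iterate ..

lemma getElem_spine {i : ℕ} (h : i < (spine hp s).length) : (spine hp s)[i] = p^[i] s :=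
  List.getElem_iterate ..

lemma spine_ne_nil : spine hp s ≠ [] :=
  List.ne_nil_of_length_pos (by rw [length_spine]; omega)

lemma head_spine : (spine hp s).head (spine_ne_nil hp s) = s := by
  rw [List.head_eq_getElem, getElem_spine, iterate_zero_apply]

lemma getLast_spine : (spine hp s).getLast (spine_ne_nil hp s) = r := by
  simp only [List.getLast_eq_getElem, getElem_spine, length_spine, Nat.add_sub_cancel,
    hp.iterate_depth]

lemma root_mem_spine : r ∈ spine hp s :=
  List.mem_iterate.mpr ⟨hp.depth s, by omega, (hp.iterate_depth s).symm⟩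

lemma nodup_spine : (spine hp s).Nodup := by
  refine List.pairwise_iff_getElem.mpr fun i j hi hj hij heq => ?_
  rw [getElem_spine, getElem_spine] at heq
  have hper : IsPeriodicPt p (j - i) (p^[i] s) := by
    rw [IsPeriodicPt, IsFixedPt, ← iterate_add_apply, Nat.sub_add_cancel hij.le, heq]
  have := hp.iterate_eq_root_iff.mp (hp.eq_root_of_mem_periodicPts
    (mk_mem_periodicPts (Nat.sub_pos_of_lt hij) hper))
  rw [length_spine] at hj
  omega

variable {hp}

lemma spine_eq_of_getElem_eq_iterate {l : List V} (hl : l.Nodup) (hne : l ≠ [])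
    (hlast : l.getLast hne = r) (hiter : ∀ i (h : i < l.length), l[i] = p^[i] (l.head hne)) :
    spine hp (l.head hne) = l := by
  have hlen : 0 < l.length := List.length_pos_of_ne_nil hne
  have hdepth : hp.depth (l.head hne) + 1 = l.length := by
    have hle : hp.depth (l.head hne) ≤ l.length - 1 := hp.iterate_eq_root_iff.mp
      (by rw [← hiter _ (by omega), ← List.getLast_eq_getElem hne, hlast])
    have : l[hp.depth (l.head hne)] = l[l.length - 1] := by
      rw [hiter, ← List.getLast_eq_getElem hne, hlast, hp.iterate_depth]
    have := hl.getElem_inj_iff.mp this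
    omega
  refine List.ext_getElem (by rw [length_spine, hdepth]) fun i h _ => ?_
  rw [getElem_spine, hiter]

end Spine

section JoyalInverse

variable [LinearOrder V] (hp : IsParentMap p r) (s : V)

noncomputable def joyalFun : V → V :=
  overrideOn ((spine hp s).toFinset.sort (· ≤ ·)) (spine hp s) p

lemma length_sort_spine : ((spine hp s).toFinset.sort (· ≤ ·)).length = (spine hp s).length := by
  rw [Finset.length_sort, List.toFinset_card_of_nodup (nodup_spine hp s)]

lemma joyalFun_getElem {i : ℕ} (h : i < ((spine hp s).toFinset.sort (· ≤ ·)).length) :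
    joyalFun hp s ((spine hp s).toFinset.sort (· ≤ ·))[i] =
      (spine hp s)[i]'(length_sort_spine hp s ▸ h) := by
  rw [joyalFun, overrideOn_getElem (Finset.sort_nodup _ _), List.getD_eq_getElem]

lemma joyalFun_of_not_mem {x : V} (hx : x ∉ spine hp s) : joyalFun hp s x = p x :=
  overrideOn_of_not_mem _ _ (by rwa [Finset.mem_sort, List.mem_toFinset])

end JoyalInverse

section PeriodicFinset

variable [Finite V] {f : V → V}

noncomputable def periodicFinset (f : V → V) : Finset V :=
  (periodicPts f).toFinite.toFinset

lemma mem_periodicFinset {x : V} : x ∈ periodicFinset f ↔ x ∈ periodicPts f :=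
  Set.Finite.mem_toFinset _

end PeriodicFinset

section Joyal

variable [Finite V] [LinearOrder V] {f : V → V}

noncomputable def cycleList (f : V → V) : List V :=
  ((periodicFinset f).sort (· ≤ ·)).map f

lemma mem_cycleList {x : V} : x ∈ cycleList f ↔ x ∈ periodicPts f := by
  simp only [cycleList, List.mem_map, Finset.mem_sort, mem_periodicFinset]
  exact ⟨fun ⟨a, ha, hax⟩ => hax ▸ (bijOn_periodicPts f).mapsTo ha,
    fun hx => (bijOn_periodicPts f).surjOn hx⟩

lemma nodup_cycleList (f : V → V) : (cycleList f).Nodup := by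
  refine (Finset.sort_nodup _ _).map_on fun x hx y hy => (bijOn_periodicPts f).injOn ?_ ?_
  exacts [mem_periodicFinset.mp ((Finset.mem_sort _).mp hx),
    mem_periodicFinset.mp ((Finset.mem_sort _).mp hy)]

lemma cycleList_ne_nil [Nonempty V] (f : V → V) : cycleList f ≠ [] := by
  obtain ⟨m, hm⟩ := exists_iterate_mem_periodicPts f (Classical.arbitrary V)
  exact List.ne_nil_of_mem (mem_cycleList.mpr hm)

/-- The tail is one entry short, so the last entry of `cycleList f` becomes the root. -/
noncomputable def joyalParent (f : V → V) : V → V :=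
  overrideOn (cycleList f) (cycleList f).tail f

lemma joyalParent_getElem {i : ℕ} (h : i + 1 < (cycleList f).length) :
    joyalParent f (cycleList f)[i] = (cycleList f)[i + 1] := by
  rw [joyalParent, overrideOn_getElem (nodup_cycleList f) _ _ (by omega),
    List.getD_eq_getElem _ _ (by rw [List.length_tail]; omega), List.getElem_tail]

lemma joyalParent_getLast (h : cycleList f ≠ []) :
    joyalParent f ((cycleList f).getLast h) = (cycleList f).getLast h := by
  have := List.length_pos_of_ne_nil h
  rw [List.getLast_eq_getElem, joyalParent, overrideOn_getElem (nodup_cycleList f) _ _ (by omega),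
    List.getD_eq_default _ _ (by rw [List.length_tail])]

lemma joyalParent_of_not_mem {x : V} (hx : x ∉ cycleList f) : joyalParent f x = f x :=
  overrideOn_of_not_mem _ _ hx

lemma iterate_joyalParent_getElem {i t : ℕ} (h : i + t < (cycleList f).length) :
    (joyalParent f)^[t] (cycleList f)[i] = (cycleList f)[i + t] := by
  induction t with
  | zero => rfl
  | succ t ih =>
    rw [iterate_succ_apply', ih (by omega), joyalParent_getElem (i := i + t) (by omega)]
    rfl

lemma isParentMap_joyalParent (h : cycleList f ≠ []) :
    IsParentMap (joyalParent f) ((cycleList f).getLast h) := by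
  refine ⟨joyalParent_getLast h, fun v => ?_⟩
  obtain ⟨m, hm⟩ := exists_iterate_mem_periodicPts f v
  have hS : ∀ x ∈ {x | x ∈ cycleList f},
      ∃ k, (joyalParent f)^[k] x ∈ ({(cycleList f).getLast h} : Set V) := by
    intro x hx
    obtain ⟨i, hi, rfl⟩ := List.getElem_of_mem hx
    refine ⟨(cycleList f).length - 1 - i, ?_⟩
    rw [iterate_joyalParent_getElem (by omega), List.getLast_eq_getElem]
    congr 1
    omega
  exact exists_iterate_mem_of_eqOn_compl (fun x hx => joyalParent_of_not_mem hx) hS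
    (mem_cycleList.mpr hm)

lemma spine_joyalParent (h : cycleList f ≠ []) :
    spine (isParentMap_joyalParent h) ((cycleList f).head h) = cycleList f :=
  spine_eq_of_getElem_eq_iterate (nodup_cycleList f) h rfl fun i hi => by
    rw [List.head_eq_getElem, iterate_joyalParent_getElem (i := 0) (by omega)]
    simp only [zero_add]

variable (hp : IsParentMap p r) (s : V)

lemma periodicPts_joyalFun : periodicPts (joyalFun hp s) = ↑(spine hp s).toFinset := by
  have sorted_index : ∀ x ∈ spine hp s, ∃ i, ∃ h : i < ((spine hp s).toFinset.sort (· ≤ ·)).length,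
      ((spine hp s).toFinset.sort (· ≤ ·))[i] = x := fun x hx =>
    List.getElem_of_mem ((Finset.mem_sort _).mpr (List.mem_toFinset.mpr hx))
  simp only [List.coe_toFinset]
  refine periodicPts_eq_of_mapsTo_of_injOn (fun x hx => ?_) (fun x hx y hy hxy => ?_) fun x => ?_
  · obtain ⟨i, hi, rfl⟩ := sorted_index x hx
    rw [Set.mem_ofPred_eq, joyalFun_getElem]
    exact List.getElem_mem _
  · obtain ⟨i, hi, rfl⟩ := sorted_index x hx
    obtain ⟨j, hj, rfl⟩ := sorted_index y hy
    rw [joyalFun_getElem, joyalFun_getElem, (nodup_spine hp s).getElem_inj_iff] at hxy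
    simp only [hxy]
  · refine exists_iterate_mem_of_eqOn_compl (fun x hx => joyalFun_of_not_mem hp s hx)
      (fun x hx => ⟨0, hx⟩) (m := hp.depth x) ?_
    show _ ∈ spine hp s
    rw [hp.iterate_depth]
    exact root_mem_spine hp s

lemma cycleList_joyalFun : cycleList (joyalFun hp s) = spine hp s := by
  have hfin : periodicFinset (joyalFun hp s) = (spine hp s).toFinset := by
    ext x
    rw [mem_periodicFinset, periodicPts_joyalFun, Finset.mem_coe]
  refine List.ext_getElem (by rw [cycleList, List.length_map, hfin, length_sort_spine])
    fun i h _ => ?_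
  simp only [cycleList, List.getElem_map, hfin]
  exact joyalFun_getElem hp s _

lemma joyalParent_joyalFun : joyalParent (joyalFun hp s) = p := by
  funext x
  rw [joyalParent, cycleList_joyalFun]
  by_cases hx : x ∈ spine hp s
  · obtain ⟨i, hi, rfl⟩ := List.getElem_of_mem hx
    rw [overrideOn_getElem (nodup_spine hp s)]
    rcases lt_or_ge (i + 1) (spine hp s).length with h | h
    · rw [List.getD_eq_getElem _ _ (by rw [List.length_tail]; omega), List.getElem_tail,
        getElem_spine, getElem_spine, iterate_succ_apply']
    · have hi' : i = hp.depth s := by rw [length_spine] at hi h; omega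
      rw [List.getD_eq_default _ _ (by rw [List.length_tail]; omega), getElem_spine, hi',
        hp.iterate_depth, hp.1]
  · rw [overrideOn_of_not_mem _ _ hx, joyalFun_of_not_mem hp s hx]

variable {hp s} in
lemma joyalFun_joyalParent (h : cycleList f ≠ []) :
    joyalFun (isParentMap_joyalParent h) ((cycleList f).head h) = f := by
  have hsort : (cycleList f).toFinset.sort (· ≤ ·) = (periodicFinset f).sort (· ≤ ·) := by
    congr 1
    ext x
    rw [List.mem_toFinset, mem_cycleList, mem_periodicFinset]
  funext x
  rw [joyalFun, spine_joyalParent, hsort]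
  by_cases hx : x ∈ periodicPts f
  · obtain ⟨i, hi, rfl⟩ :=
      List.getElem_of_mem ((Finset.mem_sort (· ≤ ·)).mpr (mem_periodicFinset.mpr hx))
    rw [overrideOn_getElem (Finset.sort_nodup _ _),
      List.getD_eq_getElem _ _ (by rwa [cycleList, List.length_map])]
    simp only [cycleList, List.getElem_map]
  · rw [overrideOn_of_not_mem _ _ (by rwa [Finset.mem_sort, mem_periodicFinset]),
      joyalParent_of_not_mem (by rwa [mem_cycleList])]

variable (V) in
/-- A doubly rooted tree is encoded by its parent map, its root and a second marked vertex. -/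
noncomputable def joyalEquiv [Nonempty V] :
    (V → V) ≃ {q : (V → V) × V // IsParentMap q.1 q.2} × V where
  toFun f := (⟨(joyalParent f, (cycleList f).getLast (cycleList_ne_nil f)),
    isParentMap_joyalParent _⟩, (cycleList f).head (cycleList_ne_nil f))
  invFun t := joyalFun t.1.2 t.2
  left_inv f := joyalFun_joyalParent _
  right_inv := by
    rintro ⟨⟨⟨p, r⟩, hp⟩, s⟩
    refine Prod.ext (Subtype.ext (Prod.ext (joyalParent_joyalFun hp s) ?_)) ?_
    · exact (List.getLast_congr _ _ (cycleList_joyalFun hp s)).trans (getLast_spine hp s)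
    · simp only [cycleList_joyalFun hp s]
      exact head_spine hp s

end Joyal

theorem card_isParentMap_mul_card [Finite V] [Nonempty V] :
    Nat.card {q : (V → V) × V // IsParentMap q.1 q.2} * Nat.card V = Nat.card V ^ Nat.card V := by
  let : LinearOrder V := LinearOrder.lift' (Finite.equivFin V) (Finite.equivFin V).injective
  rw [← Nat.card_prod, ← Nat.card_congr (joyalEquiv V), Nat.card_fun]

theorem card_rootedTree [Finite V] [Nonempty V] :
    Nat.card {t : SimpleGraph V × V // t.1.IsTree} = Nat.card V ^ (Nat.card V - 1) := by
  have hpos : 0 < Nat.card V := Nat.card_pos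
  rw [card_rootedTree_eq_card_isParentMap]
  refine Nat.eq_of_mul_eq_mul_right hpos ?_
  rw [card_isParentMap_mul_card, ← pow_succ, Nat.sub_add_cancel hpos]

end Cayley

/-- **Cayley's formula for rooted trees.** For every `n ≥ 1`, the number of
rooted trees on the vertex set `Fin n` — i.e. pairs `(T, r)` of a tree `T` (a connected,
acyclic simple graph) on `Fin n` together with a distinguished root vertex `r` — is
`n ^ (n − 1)`. -/
theorem card_rooted_trees (n : ℕ) (hn : 1 ≤ n) :
    Nat.card {p : SimpleGraph (Fin n) × Fin n // p.1.IsTree} = n ^ (n - 1) := by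
  have : Nonempty (Fin n) := ⟨⟨0, hn⟩⟩
  simpa using Cayley.card_rootedTree (V := Fin n)
end

section
/- In the ring of formal power series ℚ⟦X⟧, the series T = Σ_{n≥1} (n^{n−1}/n!) X^n satisfies the functional equation T = X · exp(T), where exp(T) = Σ_{k≥0} T^k / k!. Equivalently, the exponential generating function of rooted labelled trees is the compositional inverse of the series x e^{−x} up to the stated sign conventions. -/
open PowerSeries

/-- The exponential generating function of rooted labelled trees:
`T = Σ_{n ≥ 1} (n^{n−1}/n!) Xⁿ ∈ ℚ⟦X⟧`. -/
noncomputable def rootedTreeEGF : PowerSeries ℚ :=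
  PowerSeries.mk fun n => if n = 0 then 0 else (n : ℚ) ^ (n - 1) / (n.factorial : ℚ)

/-- The exponential `exp f = Σ_{k ≥ 0} f^k / k!` of a power series `f` with zero constant
term: since `f` has zero constant term, the coefficient of `Xⁿ` in `Σ_{k≥0} f^k/k!` receives
contributions only from `k ≤ n`, so it is `Σ_{k=0}^{n} (coeff n (f^k)) / k!`. -/
noncomputable def expOf (f : PowerSeries ℚ) : PowerSeries ℚ :=
  PowerSeries.mk fun n =>
    ∑ k ∈ Finset.range (n + 1), (PowerSeries.coeff n (f ^ k)) / (k.factorial : ℚ)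

/-!
Write `E = exp T`. The chain rule gives `E' = T' E`, which determines the coefficients of `E`
recursively from those of `T`; so it suffices that the coefficients `(n + 1)^(n - 1) / n!` of
`T / X` obey the same recursion. Clearing factorials, this is Abel's identity
`Σ_{i+j=n} C(n,i) (j+1)^(j-1) (y+i)^i = (y+n+1)^n` at `y = 1`. Both sides of Abel's identity have
`y`-derivative `n` times the case `n - 1` at `y + 1`, and both vanish at `y = -(n+1)`, where the
left side becomes the `n`-th forward difference of the degree `n - 1` polynomial `(k + 1)^(n - 1)`.
-/

open Finset Nat

theorem sum_antidiagonal_neg_one_pow_choose_mul_succ_pow {R : Type*} [CommRing R] (n : ℕ) :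
    ∑ p ∈ antidiagonal (n + 1), (-1 : R) ^ p.1 * (n + 1).choose p.1 * (p.2 + 1 : R) ^ n = 0 := by
  have h := congrFun (fwdDiff_iter_pow_eq_zero_of_lt (R := R) (Nat.lt_succ_self n)) 1
  rw [fwdDiff_iter_eq_sum_shift, Pi.zero_apply] at h
  rw [← Nat.sum_antidiagonal_swap, Nat.sum_antidiagonal_eq_sum_range_succ_mk, ← h]
  refine sum_congr rfl fun k hk => ?_
  rw [Prod.swap_prod_mk, Nat.choose_symm (Nat.lt_succ_iff.mp (mem_range.mp hk)), zsmul_eq_mul]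
  push_cast
  ring

namespace Polynomial

/-- The left side of Abel's identity as a polynomial in `y`; the induction on `n` needs the
shift `c`, because the derivative of the `n + 1` case is the `n` case at `y + 1`. -/
noncomputable def abelPoly (n : ℕ) (c : ℤ) : ℤ[X] :=
  ∑ p ∈ antidiagonal n, C (n.choose p.1 * (p.2 + 1 : ℤ) ^ (p.2 - 1)) * (X + C (c + p.1)) ^ p.1

theorem derivative_abelPoly_succ (n : ℕ) (c : ℤ) :
    derivative (abelPoly (n + 1) c) = C (n + 1 : ℤ) * abelPoly n (c + 1) := by
  rw [abelPoly, abelPoly, Nat.sum_antidiagonal_succ, derivative_add, pow_zero, mul_one,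
    derivative_C, zero_add, derivative_sum, mul_sum]
  refine sum_congr rfl fun p _ => ?_
  rw [derivative_C_mul, derivative_X_add_C_pow, Nat.add_sub_cancel, ← mul_assoc, ← C_mul,
    ← mul_assoc, ← C_mul]
  have hchoose : ((n + 1) * n.choose p.1 : ℤ) = (n + 1).choose (p.1 + 1) * (p.1 + 1) := by
    exact_mod_cast Nat.add_one_mul_choose_eq n p.1
  congr 2
  · push_cast
    linear_combination -((p.2 + 1 : ℤ) ^ (p.2 - 1)) * hchoose
  · push_cast
    ring_nf

theorem eval_abelPoly_succ (n : ℕ) (c : ℤ) : (abelPoly (n + 1) c).eval (-(c + n + 2)) = 0 := by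
  rw [abelPoly, eval_finsetSum, ← sum_antidiagonal_neg_one_pow_choose_mul_succ_pow (R := ℤ) n]
  refine sum_congr rfl fun p hp => ?_
  rw [HasAntidiagonal.mem_antidiagonal] at hp
  rcases p with ⟨i, _ | j⟩
  · simp only [add_zero] at hp
    simp [hp]
    ring_nf
  · simp only [eval_mul, eval_C, eval_pow, eval_add, eval_X]
    have hbase : -(c + n + 2) + (c + i) = -(j + 1 + 1 : ℤ) := by linarith
    rw [hbase, neg_pow, ← show j + i = n by omega]
    push_cast
    ring

theorem abelPoly_eq (n : ℕ) (c : ℤ) : abelPoly n c = (X + C (c + n + 1)) ^ n := by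
  induction n generalizing c with
  | zero => simp [abelPoly]
  | succ n ih =>
    set Q : ℤ[X] := (X + C (c + ↑(n + 1) + 1)) ^ (n + 1)
    have hderiv : derivative (abelPoly (n + 1) c - Q) = 0 := by
      rw [derivative_sub, derivative_abelPoly_succ, ih, derivative_X_add_C_pow, Nat.add_sub_cancel,
        sub_eq_zero]
      push_cast
      ring_nf
    have hQroot : Q.eval (-(c + n + 2)) = 0 := by
      simp only [Q, eval_pow, eval_add, eval_X, eval_C]
      push_cast
      ring_nf
    have hconst := eq_C_of_derivative_eq_zero hderiv
    have hcoeff := congrArg (eval (-(c + n + 2))) hconst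
    rw [eval_sub, eval_abelPoly_succ, hQroot, sub_zero, eval_C] at hcoeff
    rw [← sub_eq_zero, hconst, ← hcoeff, map_zero]

end Polynomial

theorem abel_identity {R : Type*} [CommRing R] (n : ℕ) (y : R) :
    ∑ p ∈ antidiagonal n, n.choose p.1 * (p.2 + 1 : R) ^ (p.2 - 1) * (y + p.1) ^ p.1 =
      (y + n + 1) ^ n := by
  simpa [Polynomial.abelPoly, add_assoc] using
    congrArg (Polynomial.aeval y) (Polynomial.abelPoly_eq n 0)

theorem sum_antidiagonal_succ_pow_div_factorial_mul {K : Type*} [Field K] [CharZero K] (m : ℕ) :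
    ∑ p ∈ antidiagonal m, (p.1 + 1 : K) ^ p.1 / p.1 ! * ((p.2 + 1 : K) ^ (p.2 - 1) / p.2 !) =
      (m + 2 : K) ^ m / m ! := by
  rw [show (m + 2 : K) = 1 + m + 1 by ring, ← abel_identity m (1 : K), sum_div]
  refine sum_congr rfl fun p hp => ?_
  rw [HasAntidiagonal.mem_antidiagonal] at hp
  rw [← hp, Nat.cast_add_choose]
  have : ((p.1 + p.2)! : K) ≠ 0 := Nat.cast_ne_zero.mpr (factorial_ne_zero _)
  field_simp
  ring

theorem coeff_pow_eq_zero_of_lt {R : Type*} [CommSemiring R] {f : R⟦X⟧}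
    (hf : constantCoeff f = 0) {n k : ℕ} (h : n < k) : coeff n (f ^ k) = 0 :=
  X_pow_dvd_iff.mp (pow_dvd_pow_of_dvd (X_dvd_iff.mpr hf) k) n h

theorem expOf_eq_subst_exp {f : ℚ⟦X⟧} (hf : constantCoeff f = 0) :
    expOf f = (exp ℚ).subst f := by
  ext n
  rw [coeff_subst' (HasSubst.of_constantCoeff_zero' hf), finsum_eq_sum_of_support_subset
    (s := range (n + 1)) _ fun k hk => ?_]
  · simp [expOf, div_eq_inv_mul]
  · rw [Function.mem_support] at hk
    rw [coe_range, Set.mem_Iio, Nat.lt_succ_iff]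
    by_contra! h
    exact hk (by rw [coeff_pow_eq_zero_of_lt hf h, smul_zero])

theorem derivative_expOf {f : ℚ⟦X⟧} (hf : constantCoeff f = 0) :
    d⁄dX ℚ (expOf f) = d⁄dX ℚ f * expOf f := by
  rw [expOf_eq_subst_exp hf, derivative_subst (HasSubst.of_constantCoeff_zero' hf),
    derivative_exp, mul_comm]

theorem constantCoeff_rootedTreeEGF : constantCoeff rootedTreeEGF = 0 := by
  simp [← coeff_zero_eq_constantCoeff_apply, rootedTreeEGF]

theorem coeff_succ_rootedTreeEGF (m : ℕ) :
    coeff (m + 1) rootedTreeEGF = (m + 1 : ℚ) ^ (m - 1) / m ! := by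
  rcases m with _ | m
  · simp [rootedTreeEGF]
  · simp only [rootedTreeEGF, coeff_mk, Nat.succ_ne_zero, if_false, Nat.add_sub_cancel,
      Nat.factorial_succ (m + 1)]
    push_cast
    field_simp
    ring

theorem coeff_derivative_rootedTreeEGF (m : ℕ) :
    coeff m (d⁄dX ℚ rootedTreeEGF) = (m + 1 : ℚ) ^ m / m ! := by
  rw [coeff_derivative, coeff_succ_rootedTreeEGF]
  rcases m with _ | m
  · simp
  · rw [Nat.add_sub_cancel, pow_succ]
    field_simp

theorem coeff_expOf_rootedTreeEGF (m : ℕ) :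
    coeff m (expOf rootedTreeEGF) = (m + 1 : ℚ) ^ (m - 1) / m ! := by
  induction m using Nat.strong_induction_on with
  | _ m ih =>
    rcases m with _ | m
    · simp [expOf]
    · have h := congrArg (coeff m) (derivative_expOf constantCoeff_rootedTreeEGF)
      rw [coeff_derivative, coeff_mul] at h
      rw [sum_congr rfl fun p hp => by
          rw [coeff_derivative_rootedTreeEGF,
            ih p.2 (by linarith [HasAntidiagonal.mem_antidiagonal.mp hp])],
        sum_antidiagonal_succ_pow_div_factorial_mul] at h
      rw [eq_div_iff (by positivity)] at h
      rw [Nat.add_sub_cancel, Nat.factorial_succ, eq_div_iff (by positivity)]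
      push_cast
      linear_combination h

/-- In `ℚ⟦X⟧`, the series `T = Σ_{n≥1} (n^{n−1}/n!) Xⁿ` satisfies the
functional equation `T = X · exp T`. -/
theorem rootedTreeEGF_eq_X_mul_exp :
    rootedTreeEGF = PowerSeries.X * expOf rootedTreeEGF := by
  ext n
  rcases n with _ | m
  · simp [constantCoeff_rootedTreeEGF]
  · rw [coeff_succ_X_mul, coeff_succ_rootedTreeEGF, coeff_expOf_rootedTreeEGF]
end

section
/- Let K be a field of characteristic zero and (L, ·) a pre-Lie algebra over K. For n ≥ 1 set C_n(L) = L ⊗ Λ^{n−1}(L) (with C_1(L) = L), and define d : C_n(L) → C_{n−1}(L) by d(v₀ ⊗ v₁∧⋯∧v_{n−1}) = Σ_{1≤j≤n−1} (−1)^j (v₀·v_j) ⊗ v₁∧⋯∧v̂_j∧⋯∧v_{n−1} + Σ_{1≤i<j≤n−1} (−1)^{i+j−1} v₀ ⊗ [v_i,v_j]∧v₁∧⋯∧v̂_i∧⋯∧v̂_j∧⋯∧v_{n−1}, where [a,b] = a·b − b·a and v̂ means omission. Then d is a well-defined linear map and d ∘ d = 0, so (C_•(L), d) is a chain complex. -/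
/-!
Everything is computed inside `C = L ⊗ ⋀L`. Let `ε_x` be left multiplication by `x` in `⋀L`, and
let `θ_x (m ⊗ ω) = m ⊗ ad_x ω - m·x ⊗ ω`, where `ad_x = [x, -]` is extended to `⋀L` as a
derivation. The pre-Lie identity says exactly that right multiplication makes `L` a right module
over the Lie algebra `(L, [-,-])`, hence `θ` is a representation of it; moreover
`[θ_x, ε_y] = ε_[x,y]`.

The differential `d` is the operator on `C` with `d (m ⊗ 1) = 0` and the Cartan formula
`d ε_x + ε_x d = θ_x`. These two relations give `d θ_x = θ_x d` and then
`d² ε_x = d θ_x - d ε_x d = ε_x d²`, so `d² = 0` by induction on `⋀L`. Unfolding the Cartan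
formula on `m ⊗ v₁ ∧ ⋯ ∧ vₙ` gives the explicit formula, so `d` maps `L ⊗ ⋀ⁿ⁺¹L` to
`L ⊗ ⋀ⁿL`; over a field these are submodules of `C`, and `d` restricts to them.
-/

open TensorProduct

/-- The wedge `v 0 ∧ ⋯ ∧ v (n-1)` as an element of the `n`-th exterior power `⋀[K]^n L`. -/
noncomputable def wedge (K : Type*) {L : Type*} [Field K] [AddCommGroup L] [Module K L]
    (n : ℕ) (v : Fin n → L) : ⋀[K]^n L :=
  ⟨ExteriorAlgebra.ιMulti K n v, ExteriorAlgebra.ιMulti_range K n (Set.mem_range_self v)⟩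

lemma LinearMap.exists_comp_eq_of_forall_mem_range {R M N P : Type*} [CommRing R]
    [AddCommGroup M] [Module R M] [AddCommGroup N] [Module R N] [AddCommGroup P] [Module R P]
    {f : M →ₗ[R] N} {g : P →ₗ[R] N} (hg : Function.Injective g) (h : ∀ x, f x ∈ range g) :
    ∃ d : M →ₗ[R] P, g ∘ₗ d = f :=
  ⟨(LinearEquiv.ofInjective g hg).symm ∘ₗ f.codRestrict (range g) h, by ext; simp⟩

open ExteriorAlgebra

namespace PreLie

variable {R L : Type*} [CommRing R] [AddCommGroup L] [Module R L]

def IsPreLie (mul : L →ₗ[R] L →ₗ[R] L) : Prop :=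
  ∀ x y z : L, mul (mul x y) z - mul x (mul y z) = mul (mul x z) y - mul x (mul z y)

def commutator (mul : L →ₗ[R] L →ₗ[R] L) : L →ₗ[R] L →ₗ[R] L := mul - mul.flip

@[simp]
lemma commutator_apply (mul : L →ₗ[R] L →ₗ[R] L) (x y : L) :
    commutator mul x y = mul x y - mul y x := rfl

namespace IsPreLie

variable {mul : L →ₗ[R] L →ₗ[R] L}

lemma mul_mul_sub_mul_mul (hpl : IsPreLie mul) (m x y : L) :
    mul (mul m x) y - mul (mul m y) x = mul m (commutator mul x y) := by
  have := hpl m x y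
  rw [commutator_apply, map_sub]
  linear_combination (norm := abel) this

lemma commutator_jacobi (hpl : IsPreLie mul) (x y z : L) :
    commutator mul x (commutator mul y z) - commutator mul y (commutator mul x z) =
      commutator mul (commutator mul x y) z := by
  have h₁ := hpl.mul_mul_sub_mul_mul x y z
  have h₂ := hpl.mul_mul_sub_mul_mul y x z
  have h₃ := hpl.mul_mul_sub_mul_mul z x y
  simp only [commutator_apply, map_sub, LinearMap.sub_apply] at h₁ h₂ h₃ ⊢
  linear_combination (norm := abel) -h₁ + h₂ - h₃

end IsPreLie

lemma ιMulti_cons {n : ℕ} (x : L) (t : Fin n → L) :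
    ιMulti R (n + 1) (Fin.cons x t) = ι R x * ιMulti R n t := by
  rw [ιMulti_succ_apply]; rfl

lemma ιMulti_update {n : ℕ} (t : Fin (n + 1) → L) (j : Fin (n + 1)) (z : L) :
    ιMulti R (n + 1) (Function.update t j z) =
      (-1 : R) ^ (j : ℕ) • ιMulti R (n + 1) (Fin.cons z (j.removeNth t)) := by
  rw [← Fin.insertNth_removeNth, ← Fin.cons_comp_cycleRange, AlternatingMap.map_perm,
    Fin.sign_cycleRange, Units.smul_def, ← Int.cast_smul_eq_zsmul R]
  push_cast
  rfl

section LieDeriv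

variable (b : L →ₗ[R] L →ₗ[R] L)

/- `CliffordAlgebra.foldr'` builds an operator `D` on `⋀L` from a recursion
`D (ι y * ω) = f y (ω, D ω)`. Folding into `L →ₗ ⋀L` rather than `⋀L` makes `lieDeriv b x` linear
in `x` for free; `boundaryStep` plays the same trick with the tensor factor `m`. -/
def lieDerivStep :
    L →ₗ[R] ExteriorAlgebra R L × (L →ₗ[R] ExteriorAlgebra R L) →ₗ[R]
      L →ₗ[R] ExteriorAlgebra R L :=
  LinearMap.mk₂ R
    (fun y p => LinearMap.mulRight R p.1 ∘ₗ ι R ∘ₗ b.flip y + LinearMap.mulLeft R (ι R y) ∘ₗ p.2)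
    (fun _ _ _ => by ext; simp [add_mul]; abel)
    (fun _ _ _ => by ext; simp)
    (fun _ _ _ => by ext; simp [mul_add]; abel)
    (fun _ _ _ => by ext; simp)

lemma lieDerivStep_apply (y x : L) (p : ExteriorAlgebra R L × (L →ₗ[R] ExteriorAlgebra R L)) :
    lieDerivStep b y p x = ι R (b x y) * p.1 + ι R y * p.2 x := rfl

lemma lieDerivStep_lieDerivStep (y : L) (ω : ExteriorAlgebra R L)
    (φ : L →ₗ[R] ExteriorAlgebra R L) :
    lieDerivStep b y (ι R y * ω, lieDerivStep b y (ω, φ)) = (0 : QuadraticForm R L) y • φ := by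
  ext x
  have hanti : ι R (b x y) * ι R y = -(ι R y * ι R (b x y)) :=
    eq_neg_of_add_eq_zero_left (ι_add_mul_swap _ _)
  simp only [lieDerivStep_apply, zero_apply, zero_smul, LinearMap.zero_apply,
    mul_add, ← mul_assoc, hanti, ι_sq_zero, zero_mul, add_zero, neg_mul, neg_add_cancel]

def lieDeriv : L →ₗ[R] ExteriorAlgebra R L →ₗ[R] ExteriorAlgebra R L :=
  (CliffordAlgebra.foldr' 0 (lieDerivStep b) (lieDerivStep_lieDerivStep b) 0).flip

@[simp]
lemma lieDeriv_algebraMap (x : L) (r : R) : lieDeriv b x (algebraMap R _ r) = 0 := by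
  simp [lieDeriv, CliffordAlgebra.foldr'_algebraMap]

@[simp]
lemma lieDeriv_one (x : L) : lieDeriv b x 1 = 0 := by
  simpa using lieDeriv_algebraMap b x 1

lemma lieDeriv_ι_mul (x y : L) (ω : ExteriorAlgebra R L) :
    lieDeriv b x (ι R y * ω) = ι R (b x y) * ω + ι R y * lieDeriv b x ω :=
  LinearMap.congr_fun (CliffordAlgebra.foldr'_ι_mul _ (lieDerivStep b) _ _ y ω) x

lemma lieDeriv_ιMulti (x : L) {n : ℕ} (v : Fin n → L) :
    lieDeriv b x (ιMulti R n v) = ∑ k, ιMulti R n (Function.update v k (b x (v k))) := by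
  induction n with
  | zero => simp [ιMulti_zero_apply]
  | succ n ih =>
    rw [← Fin.cons_self_tail v, ιMulti_cons, lieDeriv_ι_mul, ih, Finset.mul_sum,
      Fin.sum_univ_succ]
    congr 1
    · rw [Fin.update_cons_zero, Fin.cons_zero, ιMulti_cons]
    · refine Finset.sum_congr rfl fun k _ => ?_
      rw [Fin.cons_succ, ← Fin.cons_update, ιMulti_cons]

lemma lieDeriv_sub_lieDeriv
    (hb : ∀ x y z : L, b x (b y z) - b y (b x z) = b (b x y) z) (x y : L)
    (ω : ExteriorAlgebra R L) :
    lieDeriv b x (lieDeriv b y ω) - lieDeriv b y (lieDeriv b x ω) = lieDeriv b (b x y) ω := by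
  induction ω using CliffordAlgebra.left_induction with
  | algebraMap r => simp
  | add ω₁ ω₂ h₁ h₂ => simp only [map_add, ← h₁, ← h₂]; abel
  | ι_mul ω z ih =>
    simp only [lieDeriv_ι_mul, map_add, ← ih, ← hb x y z, map_sub, mul_sub, sub_mul]
    abel

end LieDeriv

variable (R L) in
abbrev Chains : Type _ := L ⊗[R] ExteriorAlgebra R L

variable (mul : L →ₗ[R] L →ₗ[R] L)

def wedgeLeft : L →ₗ[R] Chains R L →ₗ[R] Chains R L :=
  LinearMap.lTensorHom L ∘ₗ LinearMap.mul R (ExteriorAlgebra R L) ∘ₗ ι R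

def lieAction : L →ₗ[R] Chains R L →ₗ[R] Chains R L :=
  LinearMap.lTensorHom L ∘ₗ lieDeriv (commutator mul) -
    LinearMap.rTensorHom (ExteriorAlgebra R L) ∘ₗ mul.flip

@[simp]
lemma wedgeLeft_tmul (x m : L) (ω : ExteriorAlgebra R L) :
    wedgeLeft x (m ⊗ₜ[R] ω) = m ⊗ₜ[R] (ι R x * ω) := rfl

@[simp]
lemma lieAction_tmul (x m : L) (ω : ExteriorAlgebra R L) :
    lieAction mul x (m ⊗ₜ[R] ω) = m ⊗ₜ[R] lieDeriv (commutator mul) x ω - mul m x ⊗ₜ[R] ω :=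
  rfl

@[simp]
lemma wedgeLeft_wedgeLeft (x : L) (c : Chains R L) : wedgeLeft x (wedgeLeft x c) = 0 := by
  induction c using TensorProduct.induction_on with
  | zero => simp
  | tmul m ω => simp [← mul_assoc]
  | add c₁ c₂ h₁ h₂ => simp [h₁, h₂]

lemma lieAction_wedgeLeft (x y : L) (c : Chains R L) :
    lieAction mul x (wedgeLeft y c) =
      wedgeLeft y (lieAction mul x c) + wedgeLeft (commutator mul x y) c := by
  induction c using TensorProduct.induction_on with
  | zero => simp
  | tmul m ω =>
    simp only [wedgeLeft_tmul, lieAction_tmul, lieDeriv_ι_mul, map_sub, tmul_add]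
    abel
  | add c₁ c₂ h₁ h₂ => simp only [map_add, h₁, h₂]; abel

lemma IsPreLie.lieAction_sub_lieAction {mul : L →ₗ[R] L →ₗ[R] L} (hpl : IsPreLie mul)
    (x y : L) (c : Chains R L) :
    lieAction mul x (lieAction mul y c) - lieAction mul y (lieAction mul x c) =
      lieAction mul (commutator mul x y) c := by
  induction c using TensorProduct.induction_on with
  | zero => simp
  | tmul m ω =>
    simp only [lieAction_tmul, map_sub, tmul_sub, sub_tmul, ← hpl.mul_mul_sub_mul_mul,
      ← lieDeriv_sub_lieDeriv _ hpl.commutator_jacobi]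
    abel
  | add c₁ c₂ h₁ h₂ => simp only [map_add, ← h₁, ← h₂]; abel

def boundaryStep :
    L →ₗ[R] ExteriorAlgebra R L × (L →ₗ[R] Chains R L) →ₗ[R] L →ₗ[R] Chains R L :=
  LinearMap.mk₂ R
    (fun y p => lieAction mul y ∘ₗ (TensorProduct.mk R L _).flip p.1 - wedgeLeft y ∘ₗ p.2)
    (fun _ _ _ => by ext; simp; abel)
    (fun _ _ _ => by ext; simp [smul_sub])
    (fun _ _ _ => by ext; simp; abel)
    (fun _ _ _ => by ext; simp [smul_sub])

lemma boundaryStep_apply (y m : L) (p : ExteriorAlgebra R L × (L →ₗ[R] Chains R L)) :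
    boundaryStep mul y p m = lieAction mul y (m ⊗ₜ[R] p.1) - wedgeLeft y (p.2 m) := rfl

lemma boundaryStep_boundaryStep (y : L) (ω : ExteriorAlgebra R L) (φ : L →ₗ[R] Chains R L) :
    boundaryStep mul y (ι R y * ω, boundaryStep mul y (ω, φ)) =
      (0 : QuadraticForm R L) y • φ := by
  ext m
  have hcomm := lieAction_wedgeLeft mul y y (m ⊗ₜ[R] ω)
  simp only [wedgeLeft_tmul, commutator_apply, sub_self, map_zero, LinearMap.zero_apply,
    add_zero] at hcomm
  simp [boundaryStep_apply, hcomm]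

def boundary : Chains R L →ₗ[R] Chains R L :=
  TensorProduct.lift
    (CliffordAlgebra.foldr' 0 (boundaryStep mul) (boundaryStep_boundaryStep mul) 0).flip

@[simp]
lemma boundary_tmul_one (m : L) : boundary mul (m ⊗ₜ[R] 1) = 0 := by
  simpa [boundary] using
    LinearMap.congr_fun (CliffordAlgebra.foldr'_algebraMap _ (boundaryStep mul) _ 0 1) m

lemma boundary_wedgeLeft (x : L) (c : Chains R L) :
    boundary mul (wedgeLeft x c) = lieAction mul x c - wedgeLeft x (boundary mul c) := by
  induction c using TensorProduct.induction_on with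
  | zero => simp
  | tmul m ω =>
    exact LinearMap.congr_fun (CliffordAlgebra.foldr'_ι_mul _ (boundaryStep mul) _ 0 x ω) m
  | add c₁ c₂ h₁ h₂ => simp only [map_add, h₁, h₂]; abel

@[elab_as_elim]
lemma Chains.induction_on {P : Chains R L → Prop} (one : ∀ m, P (m ⊗ₜ[R] 1))
    (add : ∀ c₁ c₂, P c₁ → P c₂ → P (c₁ + c₂)) (wedgeLeft : ∀ x c, P c → P (wedgeLeft x c))
    (c : Chains R L) : P c := by
  induction c using TensorProduct.induction_on with
  | zero => simpa using one 0
  | add c₁ c₂ h₁ h₂ => exact add c₁ c₂ h₁ h₂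
  | tmul m ω =>
    induction ω using CliffordAlgebra.left_induction with
    | algebraMap r =>
      rw [Algebra.algebraMap_eq_smul_one, tmul_smul, smul_tmul']
      exact one (r • m)
    | add ω₁ ω₂ h₁ h₂ => simpa [tmul_add] using add _ _ h₁ h₂
    | ι_mul ω x h => exact wedgeLeft x _ h

lemma IsPreLie.boundary_lieAction {mul : L →ₗ[R] L →ₗ[R] L} (hpl : IsPreLie mul) (x : L)
    (c : Chains R L) : boundary mul (lieAction mul x c) = lieAction mul x (boundary mul c) := by
  induction c using Chains.induction_on with
  | one m => simp
  | add c₁ c₂ h₁ h₂ => simp only [map_add, h₁, h₂]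
  | wedgeLeft y c ih =>
    have h := hpl.lieAction_sub_lieAction x y c
    rw [lieAction_wedgeLeft, map_add, boundary_wedgeLeft, boundary_wedgeLeft, boundary_wedgeLeft,
      ih, map_sub, lieAction_wedgeLeft]
    linear_combination (norm := abel) -h

lemma IsPreLie.boundary_boundary {mul : L →ₗ[R] L →ₗ[R] L} (hpl : IsPreLie mul)
    (c : Chains R L) : boundary mul (boundary mul c) = 0 := by
  induction c using Chains.induction_on with
  | one m => simp
  | add c₁ c₂ h₁ h₂ => simp [h₁, h₂]
  | wedgeLeft x c ih =>
    rw [boundary_wedgeLeft, map_sub, boundary_wedgeLeft, hpl.boundary_lieAction, ih, map_zero,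
      sub_zero, sub_self]

lemma ιMulti_removeNth_succ_cons {n : ℕ} (j : Fin (n + 1)) (x : L) (t : Fin (n + 1) → L) :
    ιMulti R (n + 1) (j.succ.removeNth (Fin.cons x t : Fin (n + 2) → L)) =
      ι R x * ιMulti R n (j.removeNth t) := by
  rw [← ιMulti_cons]
  exact congrArg _ (Fin.cons_comp_succ_succAbove x t j)

section Formula

variable {M N : Type*} [AddCommGroup M] [Module R M] [AddCommGroup N] [Module R N] {n : ℕ}

def boundaryMulTerms (w : (Fin n → L) → M) (m : L) (v : Fin (n + 1) → L) : L ⊗[R] M :=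
  ∑ j : Fin (n + 1), ((-1 : R) ^ (j.val + 1)) • (mul m (v j) ⊗ₜ[R] w (j.removeNth v))

def boundaryBracketTerms (w : (Fin n → L) → M) (m : L) (v : Fin (n + 1) → L) : L ⊗[R] M :=
  ∑ j : Fin (n + 1), ∑ i : Fin (n + 1),
    if i < j then
      ((-1 : R) ^ (j.val + 1)) •
        (m ⊗ₜ[R] w (j.removeNth (Function.update v i (commutator mul (v i) (v j)))))
    else 0

def boundaryFormula (w : (Fin n → L) → M) (m : L) (v : Fin (n + 1) → L) : L ⊗[R] M :=
  boundaryMulTerms mul w m v + boundaryBracketTerms mul w m v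

lemma lTensor_boundaryFormula (f : M →ₗ[R] N) (w : (Fin n → L) → M) (m : L)
    (v : Fin (n + 1) → L) :
    f.lTensor L (boundaryFormula mul w m v) = boundaryFormula mul (f ∘ w) m v := by
  simp [boundaryFormula, boundaryMulTerms, boundaryBracketTerms, apply_ite]

lemma boundaryMulTerms_cons (m x : L) (t : Fin (n + 1) → L) :
    boundaryMulTerms mul (ιMulti R (n + 1)) m (Fin.cons x t) =
      -(mul m x ⊗ₜ[R] ιMulti R (n + 1) t) -
        wedgeLeft x (boundaryMulTerms mul (ιMulti R n) m t) := by
  rw [boundaryMulTerms, Fin.sum_univ_succ, boundaryMulTerms, map_sum, sub_eq_add_neg,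
    ← Finset.sum_neg_distrib]
  congr 1
  · simp
  · refine Finset.sum_congr rfl fun j _ => ?_
    rw [map_smul, wedgeLeft_tmul, Fin.cons_succ, ιMulti_removeNth_succ_cons, Fin.val_succ,
      pow_succ, mul_neg_one, neg_smul]

lemma boundaryBracketTerms_cons (m x : L) (t : Fin (n + 1) → L) :
    boundaryBracketTerms mul (ιMulti R (n + 1)) m (Fin.cons x t) =
      m ⊗ₜ[R] lieDeriv (commutator mul) x (ιMulti R (n + 1) t) -
        wedgeLeft x (boundaryBracketTerms mul (ιMulti R n) m t) := by
  rw [boundaryBracketTerms, boundaryBracketTerms, Fin.sum_univ_succ]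
  simp only [Fin.not_lt_zero, if_false, Finset.sum_const_zero, zero_add]
  rw [lieDeriv_ιMulti, tmul_sum, map_sum, ← Finset.sum_sub_distrib]
  refine Finset.sum_congr rfl fun j _ => ?_
  rw [Fin.sum_univ_succ, if_pos (Fin.succ_pos j), map_sum, sub_eq_add_neg,
    ← Finset.sum_neg_distrib]
  congr 1
  · rw [Fin.cons_zero, Fin.cons_succ, Fin.update_cons_zero, ιMulti_removeNth_succ_cons,
      ← ιMulti_cons, ιMulti_update, tmul_smul, Fin.val_succ, pow_succ, pow_succ, mul_neg_one,
      mul_neg_one, neg_neg]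
  · refine Finset.sum_congr rfl fun i _ => ?_
    simp only [Fin.succ_lt_succ_iff, Fin.cons_succ, ← Fin.cons_update]
    split_ifs
    · rw [ιMulti_removeNth_succ_cons, map_smul, wedgeLeft_tmul, ← neg_smul, Fin.val_succ,
        pow_succ _ (j.val + 1), mul_neg_one]
    · simp

lemma boundaryFormula_cons (m x : L) (t : Fin (n + 1) → L) :
    boundaryFormula mul (ιMulti R (n + 1)) m (Fin.cons x t) =
      lieAction mul x (m ⊗ₜ[R] ιMulti R (n + 1) t) -
        wedgeLeft x (boundaryFormula mul (ιMulti R n) m t) := by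
  rw [boundaryFormula, boundaryFormula, boundaryMulTerms_cons, boundaryBracketTerms_cons,
    lieAction_tmul, map_add]
  abel

end Formula

lemma boundary_tmul_ιMulti (m : L) {n : ℕ} (v : Fin (n + 1) → L) :
    boundary mul (m ⊗ₜ[R] ιMulti R (n + 1) v) = boundaryFormula mul (ιMulti R n) m v := by
  induction n generalizing m with
  | zero =>
    rw [← Fin.cons_self_tail v, ιMulti_cons, ← wedgeLeft_tmul, boundary_wedgeLeft,
      ιMulti_zero_apply]
    simp [boundaryFormula, boundaryMulTerms, boundaryBracketTerms]
  | succ n ih =>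
    rw [← Fin.cons_self_tail v, ιMulti_cons, ← wedgeLeft_tmul, boundary_wedgeLeft, ih,
      boundaryFormula_cons]

variable (R L) in
def inclDegree (n : ℕ) : L ⊗[R] ⋀[R]^n L →ₗ[R] Chains R L :=
  (⋀[R]^n L).subtype.lTensor L

@[simp]
lemma inclDegree_tmul {n : ℕ} (m : L) (w : ⋀[R]^n L) :
    inclDegree R L n (m ⊗ₜ w) = m ⊗ₜ (w : ExteriorAlgebra R L) := rfl

lemma boundary_inclDegree_mem_range (mul : L →ₗ[R] L →ₗ[R] L) (n : ℕ)
    (c : L ⊗[R] ⋀[R]^(n + 1) L) :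
    boundary mul (inclDegree R L (n + 1) c) ∈ LinearMap.range (inclDegree R L n) := by
  induction c using TensorProduct.induction_on with
  | zero => simp
  | add c₁ c₂ h₁ h₂ => rw [map_add, map_add]; exact add_mem h₁ h₂
  | tmul m w =>
    suffices ⋀[R]^(n + 1) L ≤ (LinearMap.range (inclDegree R L n)).comap
        (boundary mul ∘ₗ TensorProduct.mk R L _ m) from this w.2
    rw [← ιMulti_span_fixedDegree, Submodule.span_le]
    rintro _ ⟨v, rfl⟩
    exact ⟨boundaryFormula mul (fun u => ⟨ιMulti R n u, ιMulti_range R n ⟨u, rfl⟩⟩) m v,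
      (lTensor_boundaryFormula ..).trans (boundary_tmul_ιMulti mul m v).symm⟩

end PreLie

theorem preLie_differential_exists_general
    (K : Type*) [Field K]
    (L : Type*) [AddCommGroup L] [Module K L]
    (mul : L →ₗ[K] L →ₗ[K] L)
    (hpl : ∀ x y z : L,
      mul (mul x y) z - mul x (mul y z) = mul (mul x z) y - mul x (mul z y)) :
    ∃ d : (n : ℕ) → (L ⊗[K] ⋀[K]^(n+1) L) →ₗ[K] (L ⊗[K] ⋀[K]^n L),
      (∀ (n : ℕ) (v₀ : L) (v : Fin (n+1) → L),
        d n (v₀ ⊗ₜ[K] wedge K (n+1) v)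
          = (∑ j : Fin (n+1), ((-1 : K) ^ (j.val + 1)) •
              (mul v₀ (v j) ⊗ₜ[K] wedge K n (j.removeNth v)))
            + ∑ j : Fin (n+1), ∑ i : Fin (n+1),
                if i < j then
                  ((-1 : K) ^ (j.val + 1)) •
                    (v₀ ⊗ₜ[K] wedge K n
                      (j.removeNth (Function.update v i (mul (v i) (v j) - mul (v j) (v i)))))
                else 0)
      ∧ (∀ n : ℕ, (d n).comp (d (n+1)) = 0) := by
  have hincl (n : ℕ) : Function.Injective (PreLie.inclDegree K L n) :=
    Module.Flat.lTensor_preserves_injective_linearMap _ (Submodule.injective_subtype _)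
  choose d hd using fun n => LinearMap.exists_comp_eq_of_forall_mem_range (hincl n)
    (f := PreLie.boundary mul ∘ₗ PreLie.inclDegree K L (n + 1))
    (PreLie.boundary_inclDegree_mem_range mul n)
  have hd' (n : ℕ) (c) : PreLie.inclDegree K L n (d n c) =
      PreLie.boundary mul (PreLie.inclDegree K L (n + 1) c) :=
    LinearMap.congr_fun (hd n) c
  refine ⟨d, fun n v₀ v => hincl n ?_, fun n => LinearMap.ext fun c => hincl n ?_⟩
  · change _ = PreLie.inclDegree K L n (PreLie.boundaryFormula mul (wedge K n) v₀ v)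
    rw [hd', PreLie.inclDegree_tmul, PreLie.inclDegree, PreLie.lTensor_boundaryFormula]
    exact PreLie.boundary_tmul_ιMulti mul v₀ v
  · rw [LinearMap.comp_apply, hd', hd', PreLie.IsPreLie.boundary_boundary hpl,
      LinearMap.zero_apply, map_zero]

/-- Let `K` be a field of characteristic zero and `(L, ·)` a pre-Lie algebra
over `K`.  With `C_n(L) = L ⊗ Λ^{n-1}(L)` (here the module of chain degree `n+1` is
`L ⊗ ⋀[K]^n L`), the pre-Lie differential
`d(v₀ ⊗ v₁∧⋯∧v_{n−1}) = Σ_j (−1)^j (v₀·v_j) ⊗ v₁∧⋯v̂_j⋯∧v_{n−1}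
  + Σ_{i<j} (−1)^{i+j−1} v₀ ⊗ [v_i,v_j]∧v₁∧⋯v̂_i⋯v̂_j⋯∧v_{n−1}`
is a well-defined linear map with `d ∘ d = 0`, so `(C_•(L), d)` is a chain complex.
(The second sum is written below in the equivalent form obtained by placing `[v_i, v_j]`
in position `i` instead of at the front, which changes the sign `(−1)^{i+j−1}` to
`(−1)^{j+1}` in the 0-indexed conventions used here; both sums below are 0-indexed.) -/
theorem preLie_differential_exists
    (K : Type*) [Field K] [CharZero K]
    (L : Type*) [AddCommGroup L] [Module K L]
    (mul : L →ₗ[K] L →ₗ[K] L)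
    (hpl : ∀ x y z : L,
      mul (mul x y) z - mul x (mul y z) = mul (mul x z) y - mul x (mul z y)) :
    ∃ d : (n : ℕ) → (L ⊗[K] ⋀[K]^(n+1) L) →ₗ[K] (L ⊗[K] ⋀[K]^n L),
      (∀ (n : ℕ) (v₀ : L) (v : Fin (n+1) → L),
        d n (v₀ ⊗ₜ[K] wedge K (n+1) v)
          = (∑ j : Fin (n+1), ((-1 : K) ^ (j.val + 1)) •
              (mul v₀ (v j) ⊗ₜ[K] wedge K n (j.removeNth v)))
            + ∑ j : Fin (n+1), ∑ i : Fin (n+1),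
                if i < j then
                  ((-1 : K) ^ (j.val + 1)) •
                    (v₀ ⊗ₜ[K] wedge K n
                      (j.removeNth (Function.update v i (mul (v i) (v j) - mul (v j) (v i)))))
                else 0)
      ∧ (∀ n : ℕ, (d n).comp (d (n+1)) = 0) :=
  preLie_differential_exists_general K L mul hpl
end
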